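/- arXiv:1104.5293 — 2 statements merged into one kernel-verified Lean document; each statement's English description precedes it below -/
import Mathlib

section
/- (Debye representation.) Let U ⊆ ℝ³ be open, let ω, ε, μ ∈ ℂ, and set k² = ω²εμ. Let u, v : ℝ³ → ℂ be three times continuously differentiable on U and satisfy the scalar Helmholtz equations Δu + k²u = 0 and Δv + k²v = 0 on U. Define the vector fields (x u)(x) = u(x)·x and (x v)(x) = v(x)·x, where x denotes the position vector, and set E = ∇×(∇×(x v)) + iωμ ∇×(x u) and H = ∇×(∇×(x u)) − iωε ∇×(x v). Then (E, H) satisfies the time-harmonic Maxwell equations on U: ∇×H = −iωεE and ∇×E = iωμH. -/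
open scoped BigOperators

noncomputable section

/-- Points of `ℝ³`. -/
abbrev E3 := EuclideanSpace ℝ (Fin 3)

/-- Partial derivative of a scalar field in the `i`-th coordinate direction. -/
noncomputable def pd (i : Fin 3) (u : E3 → ℂ) : E3 → ℂ :=
  fun x => fderiv ℝ u x (EuclideanSpace.single i 1)

/-- Gradient of a scalar field, as a `ℂ³`-valued field. -/
noncomputable def grad (u : E3 → ℂ) : E3 → Fin 3 → ℂ :=
  fun x i => pd i u x

/-- Laplacian of a scalar field. -/
noncomputable def lap (u : E3 → ℂ) : E3 → ℂ :=
  fun x => ∑ i : Fin 3, pd i (pd i u) x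

/-- Divergence of a `ℂ³`-valued vector field. -/
noncomputable def vdiv (F : E3 → Fin 3 → ℂ) : E3 → ℂ :=
  fun x => ∑ i : Fin 3, pd i (fun y => F y i) x

/-- Curl of a `ℂ³`-valued vector field:
`(∇×F)ᵢ = ∂_{i+1} F_{i+2} − ∂_{i+2} F_{i+1}` (indices mod 3). -/
noncomputable def curl (F : E3 → Fin 3 → ℂ) : E3 → Fin 3 → ℂ :=
  fun x i => pd (i + 1) (fun y => F y (i + 2)) x - pd (i + 2) (fun y => F y (i + 1)) x

/-- Cross product on `ℂ³`. -/
def crossC (a b : Fin 3 → ℂ) : Fin 3 → ℂ :=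
  fun i => a (i + 1) * b (i + 2) - a (i + 2) * b (i + 1)

/-- The vector field `x u`: the scalar field `u` times the position vector. -/
noncomputable def xvec (u : E3 → ℂ) : E3 → Fin 3 → ℂ :=
  fun y i => u y * (y i : ℂ)

/-!
Write `k² = ω²εμ`. From `∇×∇×F = ∇(∇·F) − ΔF` and `Δ(x w) = x Δw + 2∇w = −k² x w + 2∇w` for a
solution `w` of the Helmholtz equation, `∇×∇×(x w) = ∇ψ + k² x w` with `ψ = ∇·(x w) − 2w`.
The curl kills the gradient, so `∇×∇×∇×(x w) = k² ∇×(x w)`, and each Maxwell equation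
reduces to `−iωε · iωμ = k²`.
-/

open Filter Topology

section PartialDerivatives

variable {f g : E3 → ℂ} {x : E3}

theorem pd_congr_of_eventuallyEq (h : f =ᶠ[𝓝 x] g) (i : Fin 3) : pd i f x = pd i g x := by
  simp only [pd, h.fderiv_eq]

theorem pd_add (hf : DifferentiableAt ℝ f x) (hg : DifferentiableAt ℝ g x) (i : Fin 3) :
    pd i (fun y => f y + g y) x = pd i f x + pd i g x := by
  simp [pd, fderiv_fun_add hf hg]

theorem pd_sub (hf : DifferentiableAt ℝ f x) (hg : DifferentiableAt ℝ g x) (i : Fin 3) :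
    pd i (fun y => f y - g y) x = pd i f x - pd i g x := by
  simp [pd, fderiv_fun_sub hf hg]

theorem pd_sum {ι : Type*} (s : Finset ι) {f : ι → E3 → ℂ}
    (hf : ∀ j ∈ s, DifferentiableAt ℝ (f j) x) (i : Fin 3) :
    pd i (fun y => ∑ j ∈ s, f j y) x = ∑ j ∈ s, pd i (f j) x := by
  simp [pd, fderiv_fun_sum hf]

theorem pd_const_mul (hf : DifferentiableAt ℝ f x) (c : ℂ) (i : Fin 3) :
    pd i (fun y => c * f y) x = c * pd i f x := by
  simp [pd, fderiv_const_mul hf]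

theorem pd_mul_coord (hf : DifferentiableAt ℝ f x) (i j : Fin 3) :
    pd i (fun y => f y * (y j : ℂ)) x
      = pd i f x * (x j : ℂ) + (if i = j then 1 else 0) * f x := by
  have hcoord : HasFDerivAt (fun y : E3 => (y j : ℂ))
      (Complex.ofRealCLM.comp (EuclideanSpace.proj (𝕜 := ℝ) j)) x :=
    (Complex.ofRealCLM.comp (EuclideanSpace.proj (𝕜 := ℝ) j)).hasFDerivAt
  simp only [pd, (hf.hasFDerivAt.fun_mul hcoord).fderiv]
  by_cases h : i = j <;> simp [h, Ne.symm, mul_comm, add_comm]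

theorem ContDiffAt.pd {m n : WithTop ℕ∞} (hf : ContDiffAt ℝ n f x) (hmn : m + 1 ≤ n)
    (i : Fin 3) :
    ContDiffAt ℝ m (pd i f) x :=
  (hf.fderiv_right hmn).clm_apply contDiffAt_const

theorem pd_comm (hf : ContDiffAt ℝ 2 f x) (i j : Fin 3) : pd i (pd j f) x = pd j (pd i f) x := by
  have hdf : DifferentiableAt ℝ (fderiv ℝ f) x :=
    (hf.fderiv_right (m := 1) le_rfl).differentiableAt one_ne_zero
  have hsecond : ∀ a b : Fin 3, pd a (pd b f) x
      = fderiv ℝ (fderiv ℝ f) x (EuclideanSpace.single a 1) (EuclideanSpace.single b 1) := by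
    intro a b
    unfold pd
    rw [fderiv_clm_apply hdf (differentiableAt_const _)]
    simp
  rw [hsecond, hsecond, (hf.isSymmSndFDerivAt (by simp)).eq]

end PartialDerivatives

section VectorCalculus

variable {F G : E3 → Fin 3 → ℂ} {f : E3 → ℂ} {x : E3} {m n : WithTop ℕ∞}

theorem ContDiffAt.curl (hF : ContDiffAt ℝ n F x) (hmn : m + 1 ≤ n) :
    ContDiffAt ℝ m (curl F) x :=
  contDiffAt_pi.2 fun _ =>
    ((contDiffAt_pi.1 hF _).pd hmn _).sub ((contDiffAt_pi.1 hF _).pd hmn _)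

theorem ContDiffAt.grad (hf : ContDiffAt ℝ n f x) (hmn : m + 1 ≤ n) :
    ContDiffAt ℝ m (grad f) x :=
  contDiffAt_pi.2 fun i => hf.pd hmn i

theorem ContDiffAt.vdiv (hF : ContDiffAt ℝ n F x) (hmn : m + 1 ≤ n) :
    ContDiffAt ℝ m (vdiv F) x :=
  ContDiffAt.sum fun i _ => (contDiffAt_pi.1 hF i).pd hmn i

theorem ContDiffAt.xvec (hf : ContDiffAt ℝ n f x) : ContDiffAt ℝ n (xvec f) x :=
  contDiffAt_pi.2 fun i =>
    hf.mul (Complex.ofRealCLM.comp (EuclideanSpace.proj (𝕜 := ℝ) i)).contDiff.contDiffAt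

theorem curl_congr_of_eventuallyEq (h : F =ᶠ[𝓝 x] G) : curl F x = curl G x := by
  have hcomp (j : Fin 3) : (fun y => F y j) =ᶠ[𝓝 x] fun y => G y j :=
    h.mono fun _ hy => congrFun hy j
  funext i
  simp only [curl, pd_congr_of_eventuallyEq (hcomp _)]

theorem curl_add (hF : DifferentiableAt ℝ F x) (hG : DifferentiableAt ℝ G x) :
    curl (fun y => F y + G y) x = curl F x + curl G x := by
  funext i
  simp only [curl, Pi.add_apply]
  rw [pd_add (differentiableAt_pi.1 hF _) (differentiableAt_pi.1 hG _),
    pd_add (differentiableAt_pi.1 hF _) (differentiableAt_pi.1 hG _)]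
  ring

theorem curl_const_smul (hF : DifferentiableAt ℝ F x) (c : ℂ) :
    curl (fun y => c • F y) x = c • curl F x := by
  funext i
  simp only [curl, Pi.smul_apply, smul_eq_mul]
  rw [pd_const_mul (differentiableAt_pi.1 hF _), pd_const_mul (differentiableAt_pi.1 hF _)]
  ring

theorem curl_grad_eq_zero (hf : ContDiffAt ℝ 2 f x) : curl (grad f) x = 0 := by
  funext i
  exact sub_eq_zero.2 (pd_comm hf _ _)

theorem curl_curl_eq_grad_vdiv_sub_lap (hF : ContDiffAt ℝ 2 F x) (i : Fin 3) :
    curl (curl F) x i = grad (vdiv F) x i - lap (fun y => F y i) x := by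
  have hd (a b : Fin 3) : DifferentiableAt ℝ (pd a fun y => F y b) x :=
    ((contDiffAt_pi.1 hF b).pd (m := 1) (by norm_num) a).differentiableAt one_ne_zero
  have hdiv : grad (vdiv F) x i = ∑ j, pd i (pd j fun y => F y j) x :=
    pd_sum _ (fun j _ => hd j j) i
  have hC₁ := pd_comm (contDiffAt_pi.1 hF (i + 1)) (i + 1) i
  have hC₂ := pd_comm (contDiffAt_pi.1 hF (i + 2)) (i + 2) i
  rw [hdiv]
  fin_cases i <;>
    simp only [Fin.zero_eta, Fin.mk_one, Fin.reduceFinMk, Fin.isValue, Fin.reduceAdd, zero_add,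
      curl, lap, Fin.sum_univ_three, pd_sub, hd] at hC₁ hC₂ ⊢ <;>
    linear_combination hC₁ + hC₂

theorem lap_mul_coord (hf : ContDiffAt ℝ 2 f x) (j : Fin 3) :
    lap (fun y => f y * (y j : ℂ)) x = lap f x * (x j : ℂ) + 2 * pd j f x := by
  have hpd (i : Fin 3) : DifferentiableAt ℝ (pd i f) x :=
    (hf.pd (m := 1) (by norm_num) i).differentiableAt one_ne_zero
  have hpd_mul (i : Fin 3) : pd i (fun y => f y * (y j : ℂ)) =ᶠ[𝓝 x]
      fun y => pd i f y * (y j : ℂ) + (if i = j then 1 else 0) * f y := by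
    filter_upwards [hf.eventually (by simp)] with y hy
    exact pd_mul_coord (hy.differentiableAt (by norm_num)) i j
  have hterm (i : Fin 3) : pd i (pd i fun y => f y * (y j : ℂ)) x
      = pd i (pd i f) x * (x j : ℂ) + 2 * ((if i = j then 1 else 0) * pd i f x) := by
    have hfx : DifferentiableAt ℝ f x := hf.differentiableAt (by norm_num)
    rw [pd_congr_of_eventuallyEq (hpd_mul i), pd_add (by fun_prop) (by fun_prop),
      pd_mul_coord (hpd i), pd_const_mul hfx]
    ring
  simp only [lap, hterm, Finset.sum_add_distrib, ← Finset.mul_sum, ← Finset.sum_mul, ite_mul,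
    one_mul, zero_mul, Finset.sum_ite_eq', Finset.mem_univ, if_true]

end VectorCalculus

section Debye

variable {w w' : E3 → ℂ} {x : E3} {k2 : ℂ}

theorem curl_curl_xvec (hw : ContDiffAt ℝ 2 w x) (hH : lap w x + k2 * w x = 0) :
    curl (curl (xvec w)) x = grad (fun y => vdiv (xvec w) y - 2 * w y) x + k2 • xvec w x := by
  have hdiv : DifferentiableAt ℝ (vdiv (xvec w)) x :=
    (hw.xvec.vdiv (m := 1) (by norm_num)).differentiableAt one_ne_zero
  have hwx : DifferentiableAt ℝ w x := hw.differentiableAt (by norm_num)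
  funext i
  rw [curl_curl_eq_grad_vdiv_sub_lap hw.xvec]
  simp only [grad, xvec, Pi.add_apply, Pi.smul_apply, smul_eq_mul]
  rw [lap_mul_coord hw, pd_sub hdiv (by fun_prop), pd_const_mul hwx]
  linear_combination -(x i : ℂ) * hH

theorem curl_curl_curl_xvec {U : Set E3} (hU : IsOpen U) (hw : ContDiffOn ℝ 3 w U)
    (hH : ∀ y ∈ U, lap w y + k2 * w y = 0) (hx : x ∈ U) :
    curl (curl (curl (xvec w))) x = k2 • curl (xvec w) x := by
  have hwx : ContDiffAt ℝ 3 w x := hw.contDiffAt (hU.mem_nhds hx)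
  have hxvec : DifferentiableAt ℝ (xvec w) x := hwx.xvec.differentiableAt (by norm_num)
  have hψ : ContDiffAt ℝ 2 (fun y => vdiv (xvec w) y - 2 * w y) x :=
    (hwx.xvec.vdiv le_rfl).sub (contDiffAt_const.mul (hwx.of_le (by norm_num)))
  have hcurl2 : curl (curl (xvec w)) =ᶠ[𝓝 x]
      fun y => grad (fun y => vdiv (xvec w) y - 2 * w y) y + k2 • xvec w y := by
    filter_upwards [hU.mem_nhds hx] with y hy
    exact curl_curl_xvec ((hw.contDiffAt (hU.mem_nhds hy)).of_le (by norm_num)) (hH y hy)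
  rw [curl_congr_of_eventuallyEq hcurl2,
    curl_add (G := fun y => k2 • xvec w y)
      ((hψ.grad (m := 1) (by norm_num)).differentiableAt one_ne_zero) (hxvec.const_smul k2),
    curl_const_smul hxvec, curl_grad_eq_zero hψ, zero_add]

/-- `E = debyeField v u (iωμ)` and `H = debyeField u v (-iωε)`. -/
def debyeField (w w' : E3 → ℂ) (c : ℂ) : E3 → Fin 3 → ℂ :=
  fun y => curl (curl (xvec w)) y + c • curl (xvec w') y

theorem curl_debyeField {U : Set E3} (hU : IsOpen U)
    (hw : ContDiffOn ℝ 3 w U) (hw' : ContDiffOn ℝ 3 w' U)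
    (hH : ∀ y ∈ U, lap w y + k2 * w y = 0) (c : ℂ) (hx : x ∈ U) :
    curl (debyeField w w' c) x = k2 • curl (xvec w) x + c • curl (curl (xvec w')) x := by
  have hw'x : ContDiffAt ℝ 3 (xvec w') x := (hw'.contDiffAt (hU.mem_nhds hx)).xvec
  have hcurl2 : DifferentiableAt ℝ (curl (curl (xvec w))) x :=
    (((hw.contDiffAt (hU.mem_nhds hx)).xvec.curl (m := 2) (by norm_num)).curl (m := 1)
      (by norm_num)).differentiableAt one_ne_zero
  have hcurl' : DifferentiableAt ℝ (curl (xvec w')) x :=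
    (hw'x.curl (m := 2) (by norm_num)).differentiableAt (by norm_num)
  unfold debyeField
  rw [curl_add (G := fun y => c • curl (xvec w') y) hcurl2 (hcurl'.const_smul c),
    curl_const_smul hcurl', curl_curl_curl_xvec hU hw hH hx]

end Debye

/-- **Debye representation.** If the Debye potentials `u, v` are `C³` on an open
set `U` and satisfy the scalar Helmholtz equation with `k² = ω²εμ` there, then
`E = ∇×(∇×(x v)) + iωμ ∇×(x u)` and `H = ∇×(∇×(x u)) − iωε ∇×(x v)` satisfy the
time-harmonic Maxwell equations `∇×H = −iωεE`, `∇×E = iωμH` on `U`. -/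
theorem debye_representation_satisfies_maxwell
    (U : Set E3) (hU : IsOpen U) (ω ε μ : ℂ)
    (u v : E3 → ℂ) (hu : ContDiffOn ℝ 3 u U) (hv : ContDiffOn ℝ 3 v U)
    (hHu : ∀ x ∈ U, lap u x + (ω ^ 2 * ε * μ) * u x = 0)
    (hHv : ∀ x ∈ U, lap v x + (ω ^ 2 * ε * μ) * v x = 0)
    (E H : E3 → Fin 3 → ℂ)
    (hEdef : ∀ y, ∀ i : Fin 3,
      E y i = curl (curl (xvec v)) y i + Complex.I * ω * μ * curl (xvec u) y i)
    (hHdef : ∀ y, ∀ i : Fin 3,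
      H y i = curl (curl (xvec u)) y i - Complex.I * ω * ε * curl (xvec v) y i) :
    ∀ x ∈ U, ∀ i : Fin 3,
      curl H x i = -Complex.I * ω * ε * E x i ∧
      curl E x i = Complex.I * ω * μ * H x i := by
  have hE : E = debyeField v u (Complex.I * ω * μ) := by
    funext y i
    simp [debyeField, hEdef]
  have hH : H = debyeField u v (-(Complex.I * ω * ε)) := by
    funext y i
    simp [debyeField, hHdef, sub_eq_add_neg]
  intro x hx i
  rw [hE, hH, curl_debyeField hU hu hv hHu _ hx, curl_debyeField hU hv hu hHv _ hx]
  simp only [debyeField, Pi.add_apply, Pi.smul_apply, smul_eq_mul]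
  constructor
  · linear_combination ω ^ 2 * ε * μ * curl (xvec u) x i * Complex.I_sq
  · linear_combination ω ^ 2 * ε * μ * curl (xvec v) x i * Complex.I_sq
end
end

section
/- Let k ∈ ℂ and define u : ℝ³ → ℂ by u(x) = sin(k‖x‖)/‖x‖ for x ≠ 0 and u(0) = k. Then u is infinitely differentiable (C^∞) on all of ℝ³ and satisfies the Helmholtz equation Δu + k²u = 0 at every point of ℝ³. -/
open scoped BigOperators

noncomputable section

namespace RSW

variable (k : ℂ)

def a (n : ℕ) : ℂ := (-1)^n * k^(2*n+1) / ((2*n+1).factorial : ℂ)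

def H (s : ℝ) : ℂ := ∑' n, a k n * (s:ℂ)^n

lemma norm_a (n : ℕ) : ‖a k n‖ = ‖k‖^(2*n+1) / ((2*n+1).factorial : ℝ) := by
  simp [a, norm_div, norm_pow]

lemma summable_norm (r : ℝ) (hr : 0 ≤ r) : Summable (fun n => ‖a k n‖ * r^n) := by
  have hmaj : Summable (fun n : ℕ => ‖k‖ * ((‖k‖^2 * r)^n / n.factorial)) :=
    (Real.summable_pow_div_factorial _).mul_left _
  refine hmaj.of_nonneg_of_le (fun n => by positivity) (fun n => ?_)
  rw [norm_a]
  have h2 : (n.factorial : ℝ) ≤ ((2*n+1).factorial : ℝ) := by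
    exact_mod_cast Nat.factorial_le (by omega)
  have h3 : ‖k‖^(2*n+1) * r^n = ‖k‖ * ((‖k‖^2*r)^n) := by
    rw [mul_pow, ← pow_mul]; ring
  rw [div_mul_eq_mul_div, h3, mul_div_assoc]
  gcongr

lemma hasSum_H (s : ℝ) : HasSum (fun n => a k n * (s:ℂ)^n) (H k s) := by
  refine (Summable.hasSum_iff ?_).2 rfl
  refine Summable.of_norm ?_
  have := summable_norm k |s| (abs_nonneg s)
  refine this.congr fun n => ?_
  simp [norm_mul, norm_pow, Complex.norm_real, Real.norm_eq_abs]

def p : FormalMultilinearSeries ℝ ℝ ℂ := fun n =>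
  ContinuousMultilinearMap.mkPiRing ℝ (Fin n) (a k n)

lemma p_radius : (p k).radius = ⊤ := by
  apply FormalMultilinearSeries.radius_eq_top_of_summable_norm
  intro r
  have := summable_norm k r r.coe_nonneg
  refine this.congr fun n => ?_
  simp [p, ContinuousMultilinearMap.norm_mkPiRing]

lemma hfps : HasFPowerSeriesOnBall (H k) (p k) 0 ⊤ := by
  refine ⟨by rw [p_radius], by simp, fun {y} _ => ?_⟩
  have h := hasSum_H k y
  have : (fun n => (p k) n fun _ => y) = fun n => a k n * (y:ℂ)^n := by
    funext n
    simp [p, ContinuousMultilinearMap.mkPiRing_apply, Complex.real_smul, mul_comm]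
  rw [this, zero_add]
  exact h


lemma analyticAt_H (s : ℝ) : AnalyticAt ℝ (H k) s :=
  (hfps k).analyticAt_of_mem (by simp [edist_lt_top])

lemma analyticOnNhd_H : AnalyticOnNhd ℝ (H k) Set.univ := fun s _ => analyticAt_H k s

def H1 : ℝ → ℂ := deriv (H k)
def H2 : ℝ → ℂ := deriv (H1 k)

lemma analyticAt_H1 (s : ℝ) : AnalyticAt ℝ (H1 k) s :=
  (analyticOnNhd_H k).deriv s trivial

lemma analyticAt_H2 (s : ℝ) : AnalyticAt ℝ (H2 k) s :=
  ((analyticOnNhd_H k).deriv.deriv) s trivial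

lemma hasDerivAt_H (s : ℝ) : HasDerivAt (H k) (H1 k s) s :=
  (analyticAt_H k s).differentiableAt.hasDerivAt

lemma hasDerivAt_H1 (s : ℝ) : HasDerivAt (H1 k) (H2 k s) s :=
  (analyticAt_H1 k s).differentiableAt.hasDerivAt

lemma H_zero : H k 0 = k := by
  rw [H, tsum_eq_single 0 (fun n hn => by simp [zero_pow hn])]
  simp [a]

lemma mul_H (r : ℝ) : (r:ℂ) * H k (r^2) = Complex.sin (k * r) := by
  have h1 := (hasSum_H k (r^2)).mul_left (r:ℂ)
  have h2 := Complex.hasSum_sin (k * r)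
  refine HasSum.unique ?_ h2
  refine h1.congr_fun fun n => ?_
  have : ((k*r:ℂ))^(2*n+1) = k^(2*n+1) * ((r:ℂ)^2)^n * r := by
    rw [mul_pow, ← pow_mul]; ring
  rw [this]
  push_cast
  rw [a]
  ring

lemma H_pos (s : ℝ) (hs : 0 < s) :
    H k s = Complex.sin (k * (Real.sqrt s : ℝ)) / ((Real.sqrt s : ℝ) : ℂ) := by
  have hr : (0:ℝ) < Real.sqrt s := Real.sqrt_pos.2 hs
  have hrc : ((Real.sqrt s : ℝ) : ℂ) ≠ 0 := by exact_mod_cast hr.ne'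
  have := mul_H k (Real.sqrt s)
  rw [Real.sq_sqrt hs.le] at this
  field_simp [eq_div_iff hrc]
  rw [← this]; ring


def g1 (s : ℝ) : ℂ :=
  (k * (Real.sqrt s : ℂ) * Complex.cos (k * (Real.sqrt s : ℝ)) -
      Complex.sin (k * (Real.sqrt s : ℝ))) / (2 * (Real.sqrt s : ℂ)^3)

def g2 (s : ℝ) : ℂ :=
  (-(k^2) * (Real.sqrt s : ℂ)^2 * Complex.sin (k * (Real.sqrt s : ℝ)) -
      3*k*(Real.sqrt s : ℂ) * Complex.cos (k * (Real.sqrt s : ℝ)) +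
      3 * Complex.sin (k * (Real.sqrt s : ℝ))) / (4 * (Real.sqrt s : ℂ)^5)

lemma hasDerivAt_sinK (y : ℝ) :
    HasDerivAt (fun t : ℝ => Complex.sin (k * (t:ℂ))) (k * Complex.cos (k * (y:ℂ))) y := by
  have h1 : HasDerivAt (fun z : ℂ => k * z) k (y:ℂ) := by
    simpa using (hasDerivAt_id ((y:ℝ):ℂ)).const_mul k
  have h2 := (Complex.hasDerivAt_sin (k * (y:ℂ))).comp (y:ℂ) h1
  have h3 := h2.comp_ofReal
  simpa [Function.comp, mul_comm] using h3

lemma hasDerivAt_cosK (y : ℝ) :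
    HasDerivAt (fun t : ℝ => Complex.cos (k * (t:ℂ))) (-(k * Complex.sin (k * (y:ℂ)))) y := by
  have h1 : HasDerivAt (fun z : ℂ => k * z) k (y:ℂ) := by
    simpa using (hasDerivAt_id ((y:ℝ):ℂ)).const_mul k
  have h2 := (Complex.hasDerivAt_cos (k * (y:ℂ))).comp (y:ℂ) h1
  have h3 := h2.comp_ofReal
  simpa [Function.comp, mul_comm] using h3

lemma hasDerivAt_H_pos (s : ℝ) (hs : 0 < s) : HasDerivAt (H k) (g1 k s) s := by
  set r := Real.sqrt s with hrdef
  have hr : (0:ℝ) < r := Real.sqrt_pos.2 hs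
  have hrc : ((r:ℝ):ℂ) ≠ 0 := by exact_mod_cast hr.ne'
  have hsqrt : HasDerivAt Real.sqrt (1/(2*r)) s := Real.hasDerivAt_sqrt hs.ne'
  have hN : HasDerivAt (fun t : ℝ => Complex.sin (k * ((Real.sqrt t : ℝ):ℂ)))
      ((1/(2*r)) • (k * Complex.cos (k * (r:ℂ)))) s := by
    have := (hasDerivAt_sinK k r).scomp s hsqrt
    simpa [Function.comp_def] using this
  have hD : HasDerivAt (fun t : ℝ => ((Real.sqrt t : ℝ):ℂ)) (((1/(2*r):ℝ)):ℂ) s :=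
    hsqrt.ofReal_comp
  have hG := hN.div hD hrc
  have hEq : H k =ᶠ[nhds s] fun t => Complex.sin (k * ((Real.sqrt t : ℝ):ℂ)) / ((Real.sqrt t : ℝ):ℂ) := by
    filter_upwards [isOpen_Ioi.mem_nhds hs] with t ht
    exact H_pos k t ht
  have hH := hG.congr_of_eventuallyEq hEq
  refine hH.congr_deriv ?_
  symm
  rw [g1]
  simp only [Complex.real_smul, ← hrdef]
  push_cast
  have h2r : ((2:ℝ)*r) ≠ 0 := by positivity
  field_simp [Complex.real_smul]

lemma hasDerivAt_g1_pos (s : ℝ) (hs : 0 < s) : HasDerivAt (g1 k) (g2 k s) s := by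
  set r := Real.sqrt s with hrdef
  have hr : (0:ℝ) < r := Real.sqrt_pos.2 hs
  have hrc : ((r:ℝ):ℂ) ≠ 0 := by exact_mod_cast hr.ne'
  have hsqrt : HasDerivAt Real.sqrt (1/(2*r)) s := Real.hasDerivAt_sqrt hs.ne'
  have hRe : HasDerivAt (fun t : ℝ => ((Real.sqrt t : ℝ):ℂ)) (((1/(2*r):ℝ)):ℂ) s :=
    hsqrt.ofReal_comp
  have hA : HasDerivAt (fun t : ℝ => k * ((Real.sqrt t : ℝ):ℂ)) (k * ((1/(2*r):ℝ):ℂ)) s :=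
    hRe.const_mul k
  have hB : HasDerivAt (fun t : ℝ => Complex.cos (k * ((Real.sqrt t : ℝ):ℂ)))
      ((1/(2*r)) • (-(k * Complex.sin (k * (r:ℂ))))) s := by
    have := (hasDerivAt_cosK k r).scomp s hsqrt
    simpa [Function.comp_def] using this
  have hN2 : HasDerivAt (fun t : ℝ => Complex.sin (k * ((Real.sqrt t : ℝ):ℂ)))
      ((1/(2*r)) • (k * Complex.cos (k * (r:ℂ)))) s := by
    have := (hasDerivAt_sinK k r).scomp s hsqrt
    simpa [Function.comp_def] using this
  have hNum := (hA.mul hB).sub hN2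
  have hDen : HasDerivAt (fun t : ℝ => 2*((Real.sqrt t:ℝ):ℂ)^3)
      ((2:ℂ)*(((3*r^2*(1/(2*r))):ℝ):ℂ)) s := by
    have h := ((hsqrt.pow 3).ofReal_comp).const_mul (2:ℂ)
    have h3 : ((3:ℕ):ℝ) * r ^ (3-1) * (1/(2*r)) = 3*r^2*(1/(2*r)) := by norm_num
    rw [h3] at h
    simpa [Complex.ofReal_pow] using h
  have hden_ne : 2 * ((r:ℝ):ℂ)^3 ≠ 0 := by
    simp [pow_ne_zero, hrc]
  have hG := hNum.div hDen hden_ne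
  refine hG.congr_deriv ?_
  symm
  rw [g2]
  simp only [Complex.real_smul, ← hrdef, Pi.mul_apply, Pi.sub_apply]
  push_cast
  field_simp [Complex.real_smul]
  push_cast
  ring

lemma ode_pos (s : ℝ) (hs : 0 < s) :
    4*(s:ℂ) * H2 k s + 6 * H1 k s + k^2 * H k s = 0 := by
  have h1 : H1 k s = g1 k s := (hasDerivAt_H_pos k s hs).deriv
  have hEq : H1 k =ᶠ[nhds s] g1 k := by
    filter_upwards [isOpen_Ioi.mem_nhds hs] with t ht
    exact (hasDerivAt_H_pos k t ht).deriv
  have h2 : H2 k s = g2 k s :=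
    ((hasDerivAt_g1_pos k s hs).congr_of_eventuallyEq hEq).deriv
  set r := Real.sqrt s with hrdef
  have hr : (0:ℝ) < r := Real.sqrt_pos.2 hs
  have hrc : ((r:ℝ):ℂ) ≠ 0 := by exact_mod_cast hr.ne'
  have hr2 : ((s:ℝ):ℂ) = ((r:ℝ):ℂ)^2 := by
    have : r^2 = s := Real.sq_sqrt hs.le
    exact_mod_cast this.symm
  rw [h1, h2, H_pos k s hs, g1, g2, hr2]
  field_simp
  ring

lemma ode (s : ℝ) (hs : 0 ≤ s) :
    4*(s:ℂ) * H2 k s + 6 * H1 k s + k^2 * H k s = 0 := by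
  rcases hs.lt_or_eq with h | h
  · exact ode_pos k s h
  · subst h
    set Phi : ℝ → ℂ := fun t => 4*(t:ℂ) * H2 k t + 6 * H1 k t + k^2 * H k t with hPhi
    have hCH : Continuous (H k) :=
      continuous_iff_continuousAt.2 fun s => (analyticAt_H k s).continuousAt
    have hCH1 : Continuous (H1 k) :=
      continuous_iff_continuousAt.2 fun s => (analyticAt_H1 k s).continuousAt
    have hCH2 : Continuous (H2 k) :=
      continuous_iff_continuousAt.2 fun s => (analyticAt_H2 k s).continuousAt
    have hc : Continuous Phi := by fun_prop
    have h1 : Filter.Tendsto Phi (nhdsWithin 0 (Set.Ioi 0)) (nhds (Phi 0)) :=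
      hc.continuousWithinAt
    have h2 : Filter.Tendsto Phi (nhdsWithin 0 (Set.Ioi 0)) (nhds 0) := by
      refine Filter.Tendsto.congr' ?_ tendsto_const_nhds
      filter_upwards [self_mem_nhdsWithin] with t ht
      exact (ode_pos k t ht).symm
    have := tendsto_nhds_unique h1 h2
    simpa [hPhi] using this




def q (x : E3) : ℝ := ∑ i, x i ^ 2

lemma q_zero : q 0 = 0 := by simp [q]

lemma q_eq_norm (x : E3) : q x = ‖x‖^2 := by
  rw [EuclideanSpace.norm_eq, Real.sq_sqrt (by positivity)]
  simp [q, Real.norm_eq_abs, sq_abs]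

lemma q_nonneg (x : E3) : 0 ≤ q x := by rw [q_eq_norm]; positivity

lemma q_analyticAt (x : E3) : AnalyticAt ℝ q x := by
  refine Finset.analyticAt_fun_sum _ fun i _ => ?_
  exact ((EuclideanSpace.proj (𝕜 := ℝ) i).analyticAt x).pow 2

def L (x : E3) : E3 →L[ℝ] ℝ := ∑ i, (2 * x i) • (EuclideanSpace.proj (𝕜 := ℝ) i)

lemma q_hasFDerivAt (x : E3) : HasFDerivAt q (L x) x := by
  have h : ∀ i ∈ Finset.univ, HasFDerivAt (fun y : E3 => y i ^ 2)
      ((2 * x i) • (EuclideanSpace.proj (𝕜 := ℝ) i)) x := by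
    intro i _
    have hp : HasFDerivAt (fun y : E3 => y i) (EuclideanSpace.proj (𝕜 := ℝ) i) x :=
      (EuclideanSpace.proj (𝕜 := ℝ) i).hasFDerivAt
    have hm := hp.mul hp
    have heq : (fun y : E3 => y i ^ 2) = fun y : E3 => y i * y i := by
      funext y; ring
    rw [heq]
    refine hm.congr_fderiv ?_
    symm
    rw [two_mul, add_smul]
  have := HasFDerivAt.fun_sum h
  exact this

lemma L_apply (x : E3) (i : Fin 3) : L x (EuclideanSpace.single i 1) = 2 * x i := by
  rw [L, ContinuousLinearMap.sum_apply]
  rw [Finset.sum_eq_single i]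
  · simp [EuclideanSpace.single_apply]
  · intro j _ hj
    simp [EuclideanSpace.single_apply, hj]
  · simp

variable (k : ℂ)

lemma U_hasFDerivAt (x : E3) :
    HasFDerivAt (fun y => H k (q y))
      ((ContinuousLinearMap.smulRight (1 : ℝ →L[ℝ] ℝ) (H1 k (q x))).comp (L x)) x := by
  exact (hasDerivAt_H k (q x)).hasFDerivAt.comp x (q_hasFDerivAt x)

lemma pdU (i : Fin 3) (x : E3) :
    pd i (fun y => H k (q y)) x = (2 * x i) • H1 k (q x) := by
  rw [pd, (U_hasFDerivAt k x).fderiv]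
  simp [L_apply]

lemma pdV (i : Fin 3) (x : E3) :
    pd i (fun y => (2 * y i) • H1 k (q y)) x
      = (2:ℝ) • H1 k (q x) + ((2 * x i) * (2 * x i)) • H2 k (q x) := by
  have hc : HasFDerivAt (fun y : E3 => 2 * y i)
      ((2:ℝ) • (EuclideanSpace.proj (𝕜 := ℝ) i)) x := by
    simpa using ((EuclideanSpace.proj (𝕜 := ℝ) i).hasFDerivAt (x := x)).const_mul (2:ℝ)
  have hF : HasFDerivAt (fun y => H1 k (q y))
      ((ContinuousLinearMap.smulRight (1 : ℝ →L[ℝ] ℝ) (H2 k (q x))).comp (L x)) x :=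
    (hasDerivAt_H1 k (q x)).hasFDerivAt.comp x (q_hasFDerivAt x)
  have h := hc.fun_smul hF
  rw [pd, h.fderiv]
  simp only [ContinuousLinearMap.add_apply, ContinuousLinearMap.coe_smul',
    Pi.smul_apply, ContinuousLinearMap.comp_apply, ContinuousLinearMap.smulRight_apply,
    ContinuousLinearMap.one_apply, ContinuousLinearMap.coe_coe, L_apply,
    EuclideanSpace.single_apply, smul_smul]
  simp [EuclideanSpace.single_apply]
  exact add_comm _ _

lemma lapU (x : E3) :
    lap (fun y => H k (q y)) x = (6:ℝ) • H1 k (q x) + (4 * q x) • H2 k (q x) := by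
  rw [lap]
  have hV : ∀ i : Fin 3, pd i (fun y => H k (q y)) = fun y => (2 * y i) • H1 k (q y) :=
    fun i => funext fun y => pdU k i y
  have : ∀ i : Fin 3, pd i (pd i (fun y => H k (q y))) x
      = (2:ℝ) • H1 k (q x) + ((2 * x i) * (2 * x i)) • H2 k (q x) := by
    intro i
    rw [hV i]
    exact pdV k i x
  rw [Finset.sum_congr rfl fun i _ => this i]
  rw [Fin.sum_univ_three]
  have hq : (q x : ℂ) = (x 0:ℂ)^2 + (x 1:ℂ)^2 + (x 2:ℂ)^2 := by
    rw [q, Fin.sum_univ_three]; push_cast; ring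
  simp only [Complex.real_smul]
  push_cast
  rw [hq]
  ring

end RSW

/-- The function `u(x) = sin(k‖x‖)/‖x‖` for `x ≠ 0`, `u(0) = k`
(i.e. `k·j₀(k‖x‖)`) is `C^∞` on all of `ℝ³` and satisfies the Helmholtz equation
`Δu + k²u = 0` everywhere. -/
theorem regular_spherical_wave_smooth_and_helmholtz (k : ℂ)
    (u : E3 → ℂ) (h0 : u 0 = k)
    (hne : ∀ x : E3, x ≠ 0 → u x = Complex.sin (k * (‖x‖ : ℂ)) / (‖x‖ : ℂ)) :
    ContDiff ℝ (⊤ : ℕ∞) u ∧ ∀ x : E3, lap u x + k ^ 2 * u x = 0 := by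
  have hu : u = fun y => RSW.H k (RSW.q y) := by
    funext y
    rcases eq_or_ne y 0 with rfl | hy
    · rw [h0, RSW.q_zero, RSW.H_zero]
    · have hn : (0:ℝ) < ‖y‖ := norm_pos_iff.2 hy
      rw [hne y hy, RSW.q_eq_norm, RSW.H_pos k _ (pow_pos hn 2), Real.sqrt_sq hn.le]
  constructor
  · rw [hu]
    refine contDiff_iff_contDiffAt.2 fun y => ?_
    exact ((RSW.analyticAt_H k (RSW.q y)).comp (RSW.q_analyticAt y)).contDiffAt
  · intro x
    rw [hu, RSW.lapU]
    have hode := RSW.ode k (RSW.q x) (RSW.q_nonneg x)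
    simp only [Complex.real_smul]
    push_cast
    linear_combination hode
end
end
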